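/- Let d be a complex number, and let f₄ be the polynomial in three complex variables x, y, z given by f₄ = x⁴y + 2zx²y² + z²y³ + (d²−1)zx³ + (d²−1)z²xy + (d³+2d²+d)z³. Then for every real number λ > 2/3 and every open neighborhood U of the origin in ℂ³, the function (x,y,z) ↦ |f₄(x,y,z)|^{−2λ} is not integrable on U with respect to Lebesgue measure on ℂ³ ≅ ℝ⁶. -/

import Mathlib

/-!
`f₄` is weighted homogeneous: `f₄(s²x, sy, s³z) = s⁹ f₄(x, y, z)`. Rescaling a bound for `|f₄|`
on the compact ball of radius `ε` gives `|f₄| ≤ M t⁹` on the polydisc `D(εt²) × D(εt) × D(εt³)`,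
whose volume is `π³ ε⁶ t¹²`. Its zero set is null (over `x, y ≠ 0` the fibre is the root set
of a cubic in `z` with constant term `x⁴y`), so the junk value `0 ^ (-2λ) = 0` is harmless and
`∫_U |f₄|^(-2λ) ≥ M^(-2λ) π³ ε⁶ t^(12 - 18λ)`, which is unbounded as `t → 0` once `λ > 2/3`.
-/

open MeasureTheory Filter Topology Metric

theorem MeasureTheory.Measure.measure_prod_prod_null_of_ae_ae_countable {α β γ : Type*}
    [MeasurableSpace α] [MeasurableSpace β] [MeasurableSpace γ] {μ : Measure α} {ν : Measure β}
    {ρ : Measure γ} [NullSingletonClass ρ] {s : Set (α × β × γ)} (hs : MeasurableSet s)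
    (h : ∀ᵐ x ∂μ, ∀ᵐ y ∂ν, {z | (x, y, z) ∈ s}.Countable) : μ.prod (ν.prod ρ) s = 0 :=
  measure_prod_null_of_ae_null hs <| h.mono fun _ hx =>
    measure_prod_null_of_ae_null (hs.preimage (by fun_prop)) (hx.mono fun _ hy => hy.measure_zero ρ)

def polydisc (r₁ r₂ r₃ : ℝ) : Set (ℂ × ℂ × ℂ) := ball 0 r₁ ×ˢ ball 0 r₂ ×ˢ ball 0 r₃

theorem polydisc_self (r : ℝ) : polydisc r r r = ball 0 r := by
  rw [polydisc, ball_prod_same, ball_prod_same]; rfl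

theorem polydisc_mono {r₁ r₂ r₃ s₁ s₂ s₃ : ℝ} (h₁ : r₁ ≤ s₁) (h₂ : r₂ ≤ s₂) (h₃ : r₃ ≤ s₃) :
    polydisc r₁ r₂ r₃ ⊆ polydisc s₁ s₂ s₃ :=
  Set.prod_mono (ball_subset_ball h₁) (Set.prod_mono (ball_subset_ball h₂) (ball_subset_ball h₃))

theorem isOpen_polydisc (r₁ r₂ r₃ : ℝ) : IsOpen (polydisc r₁ r₂ r₃) :=
  isOpen_ball.prod (isOpen_ball.prod isOpen_ball)

theorem volume_polydisc {r₁ r₂ r₃ : ℝ} (h₁ : 0 ≤ r₁) (h₂ : 0 ≤ r₂) (h₃ : 0 ≤ r₃) :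
    volume (polydisc r₁ r₂ r₃) = ENNReal.ofReal (Real.pi ^ 3 * (r₁ * r₂ * r₃) ^ 2) := by
  rw [polydisc, Measure.volume_eq_prod, Measure.prod_prod, Measure.volume_eq_prod,
    Measure.prod_prod, Complex.volume_ball, Complex.volume_ball, Complex.volume_ball,
    ← NNReal.coe_real_pi, ← ENNReal.ofReal_coe_nnreal, ← ENNReal.ofReal_pow h₁,
    ← ENNReal.ofReal_pow h₂, ← ENNReal.ofReal_pow h₃, ← ENNReal.ofReal_mul (by positivity),
    ← ENNReal.ofReal_mul (by positivity), ← ENNReal.ofReal_mul (by positivity),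
    ← ENNReal.ofReal_mul (by positivity), ← ENNReal.ofReal_mul (by positivity)]
  congr 1
  ring

theorem exists_norm_le_of_weightedHomogeneous {F : ℂ × ℂ × ℂ → ℂ} (hFc : Continuous F)
    {a b c D : ℕ} (hF : ∀ s : ℝ, 0 < s → ∀ x y z : ℂ,
      F ((s : ℂ) ^ a * x, (s : ℂ) ^ b * y, (s : ℂ) ^ c * z) = (s : ℂ) ^ D * F (x, y, z))
    (r : ℝ) :
    ∃ M > 0, ∀ t : ℝ, 0 < t → ∀ p ∈ polydisc (r * t ^ a) (r * t ^ b) (r * t ^ c),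
      ‖F p‖ ≤ M * t ^ D := by
  obtain ⟨M, hM⟩ := (isCompact_closedBall (0 : ℂ × ℂ × ℂ) r).exists_bound_of_continuousOn
    hFc.continuousOn
  refine ⟨max M 1, by positivity, fun t ht p hp => ?_⟩
  obtain ⟨⟨x, y, z⟩, rfl⟩ : ∃ q : ℂ × ℂ × ℂ,
      ((t : ℂ) ^ a * q.1, (t : ℂ) ^ b * q.2.1, (t : ℂ) ^ c * q.2.2) = p := by
    have ht' : (t : ℂ) ≠ 0 := by exact_mod_cast ht.ne'
    exact ⟨(p.1 / (t : ℂ) ^ a, p.2.1 / (t : ℂ) ^ b, p.2.2 / (t : ℂ) ^ c), by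
      ext <;> exact mul_div_cancel₀ _ (pow_ne_zero _ ht')⟩
  have hq : (x, y, z) ∈ closedBall (0 : ℂ × ℂ × ℂ) r := by
    refine ball_subset_closedBall ?_
    rw [← polydisc_self]
    simp only [polydisc, Set.mem_prod, mem_ball_zero_iff, norm_mul, norm_pow, Complex.norm_real,
      Real.norm_of_nonneg ht.le] at hp ⊢
    obtain ⟨hx, hy, hz⟩ := hp
    exact ⟨lt_of_mul_lt_mul_left (hx.trans_eq (mul_comm _ _)) (by positivity),
      lt_of_mul_lt_mul_left (hy.trans_eq (mul_comm _ _)) (by positivity),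
      lt_of_mul_lt_mul_left (hz.trans_eq (mul_comm _ _)) (by positivity)⟩
  rw [hF t ht, norm_mul, norm_pow, Complex.norm_real, Real.norm_of_nonneg ht.le, mul_comm]
  gcongr
  exact (hM _ hq).trans (le_max_left _ _)

theorem not_integrableOn_norm_rpow_of_weightedHomogeneous {F : ℂ × ℂ × ℂ → ℂ}
    (hFc : Continuous F) {a b c D : ℕ} (hF : ∀ s : ℝ, 0 < s → ∀ x y z : ℂ,
      F ((s : ℂ) ^ a * x, (s : ℂ) ^ b * y, (s : ℂ) ^ c * z) = (s : ℂ) ^ D * F (x, y, z))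
    (hZ : volume {p | F p = 0} = 0) {lam : ℝ} (hlam : (a + b + c : ℝ) < lam * D)
    {U : Set (ℂ × ℂ × ℂ)} (hU : U ∈ 𝓝 0) :
    ¬ IntegrableOn (fun p => ‖F p‖ ^ (-2 * lam)) U volume := by
  obtain ⟨ε, hε, hεU⟩ := Metric.mem_nhds_iff.1 hU
  obtain ⟨M, hM, hFM⟩ := exists_norm_le_of_weightedHomogeneous hFc hF ε
  have hlam0 : 0 < lam :=
    pos_of_mul_pos_left ((by positivity : (0 : ℝ) ≤ a + b + c).trans_lt hlam) D.cast_nonneg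
  set K := M ^ (-2 * lam) * (Real.pi ^ 3 * ε ^ 6)
  set e : ℝ := 2 * (a + b + c) - 2 * lam * D
  have hlower : ∀ t ∈ Set.Ioc (0 : ℝ) 1,
      ENNReal.ofReal (K * t ^ e) ≤ ∫⁻ p in U, ‖‖F p‖ ^ (-2 * lam)‖ₑ := by
    rintro t ⟨ht0, ht1⟩
    set P := polydisc (ε * t ^ a) (ε * t ^ b) (ε * t ^ c)
    have hPU : P ⊆ U := by
      refine (polydisc_mono ?_ ?_ ?_).trans ((polydisc_self ε).trans_subset hεU) <;>
        exact mul_le_of_le_one_right hε.le (pow_le_one₀ ht0.le ht1)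
    have hbound : ∀ᵐ p, p ∈ P →
        ENNReal.ofReal ((M * t ^ D) ^ (-2 * lam)) ≤ ‖‖F p‖ ^ (-2 * lam)‖ₑ := by
      filter_upwards [measure_eq_zero_iff_ae_notMem.1 hZ] with p hp hpP
      rw [Real.enorm_eq_ofReal (by positivity)]
      exact ENNReal.ofReal_le_ofReal (Real.rpow_le_rpow_of_nonpos (norm_pos_iff.2 hp)
        (hFM t ht0 p hpP) (by linarith))
    have hK : K * t ^ e = (M * t ^ D) ^ (-2 * lam) *
        (Real.pi ^ 3 * (ε * t ^ a * (ε * t ^ b) * (ε * t ^ c)) ^ 2) := by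
      rw [Real.mul_rpow hM.le (by positivity), ← Real.rpow_natCast t D, ← Real.rpow_mul ht0.le,
        show (ε * t ^ a * (ε * t ^ b) * (ε * t ^ c)) ^ 2 = ε ^ 6 * t ^ (2 * (a + b + c)) by ring,
        ← Real.rpow_natCast t (2 * (a + b + c)),
        show e = (D : ℝ) * (-2 * lam) + ((2 * (a + b + c) : ℕ) : ℝ) by push_cast; ring,
        Real.rpow_add ht0]
      ring
    calc ENNReal.ofReal (K * t ^ e)
        = ENNReal.ofReal ((M * t ^ D) ^ (-2 * lam)) * volume P := by
          rw [volume_polydisc (by positivity) (by positivity) (by positivity),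
            ← ENNReal.ofReal_mul (by positivity), hK]
      _ = ∫⁻ _ in P, ENNReal.ofReal ((M * t ^ D) ^ (-2 * lam)) := (setLIntegral_const _ _).symm
      _ ≤ ∫⁻ p in P, ‖‖F p‖ ^ (-2 * lam)‖ₑ :=
          setLIntegral_mono_ae' (isOpen_polydisc _ _ _).measurableSet hbound
      _ ≤ ∫⁻ p in U, ‖‖F p‖ ^ (-2 * lam)‖ₑ := lintegral_mono_set hPU
  have hKt : Tendsto (fun t => K * t ^ e) (𝓝[>] 0) atTop :=
    (tendsto_rpow_neg_nhdsGT_zero (by linarith)).const_mul_atTop (by positivity)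
  intro hint
  refine hint.2.ne (top_le_iff.1 (le_of_tendsto (ENNReal.tendsto_ofReal_atTop.comp hKt) ?_))
  filter_upwards [Ioc_mem_nhdsGT one_pos] using hlower

def f₄ (d : ℂ) (p : ℂ × ℂ × ℂ) : ℂ :=
  p.1 ^ 4 * p.2.1 + 2 * p.2.2 * p.1 ^ 2 * p.2.1 ^ 2 + p.2.2 ^ 2 * p.2.1 ^ 3
    + (d ^ 2 - 1) * p.2.2 * p.1 ^ 3
    + (d ^ 2 - 1) * p.2.2 ^ 2 * p.1 * p.2.1
    + (d ^ 3 + 2 * d ^ 2 + d) * p.2.2 ^ 3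

open Polynomial in
theorem finite_setOf_f₄_eq_zero (d : ℂ) {x y : ℂ} (hx : x ≠ 0) (hy : y ≠ 0) :
    {z | f₄ d (x, y, z) = 0}.Finite := by
  set P : ℂ[X] := C (d ^ 3 + 2 * d ^ 2 + d) * X ^ 3 + C (y ^ 3 + (d ^ 2 - 1) * x * y) * X ^ 2
    + C (2 * x ^ 2 * y ^ 2 + (d ^ 2 - 1) * x ^ 3) * X + C (x ^ 4 * y)
  have hP : P ≠ 0 := fun h => mul_ne_zero (pow_ne_zero 4 hx) hy (by
    simpa [P] using congrArg (eval 0) h)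
  refine (finite_setOfPred_isRoot hP).subset fun z hz => ?_
  replace hz : f₄ d (x, y, z) = 0 := hz
  rw [f₄] at hz
  simp only [Set.mem_ofPred_eq, IsRoot, P, eval_add, eval_mul, eval_pow, eval_C, eval_X]
  linear_combination hz

theorem volume_setOf_f₄_eq_zero (d : ℂ) : volume {p | f₄ d p = 0} = 0 := by
  refine Measure.measure_prod_prod_null_of_ae_ae_countable
    (measurableSet_eq_fun (by unfold f₄; fun_prop) measurable_const) ?_
  filter_upwards [Measure.ae_ne volume 0] with x hx
  filter_upwards [Measure.ae_ne volume 0] with y hy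
  exact (finite_setOf_f₄_eq_zero d hx hy).countable

/-- Non-integrability of `|f₄|^(-2λ)` near the origin for every `λ > 2/3`:
the log canonical threshold of the invariant divisor `{p₀₁₃₅ = 0}` is at most `2/3`.
Here `ℂ³` is identified with `ℂ × ℂ × ℂ` with coordinates `x = p.1`, `y = p.2.1`,
`z = p.2.2`, carrying the (product) Lebesgue measure. -/
theorem stmt_9 (d : ℂ) (lam : ℝ) (hlam : 2 / 3 < lam)
    (U : Set (ℂ × ℂ × ℂ)) (hU : IsOpen U) (h0 : ((0 : ℂ), (0 : ℂ), (0 : ℂ)) ∈ U) :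
    ¬ IntegrableOn
      (fun p : ℂ × ℂ × ℂ =>
        norm
          (p.1 ^ 4 * p.2.1 + 2 * p.2.2 * p.1 ^ 2 * p.2.1 ^ 2 + p.2.2 ^ 2 * p.2.1 ^ 3
            + (d ^ 2 - 1) * p.2.2 * p.1 ^ 3
            + (d ^ 2 - 1) * p.2.2 ^ 2 * p.1 * p.2.1
            + (d ^ 3 + 2 * d ^ 2 + d) * p.2.2 ^ 3) ^ (-2 * lam))
      U volume := by
  have hweights : ((2 : ℕ) + (1 : ℕ) + (3 : ℕ) : ℝ) < lam * (9 : ℕ) := by push_cast; linarith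
  exact not_integrableOn_norm_rpow_of_weightedHomogeneous (F := f₄ d) (by unfold f₄; fun_prop)
    (fun s _ x y z => by unfold f₄; ring) (volume_setOf_f₄_eq_zero d) hweights (hU.mem_nhds h0)
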